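/- arXiv:1709.10294 — 3 statements merged into one kernel-verified Lean document; each statement's English description precedes it below -/
import Mathlib

section
/- Let C be the (m+n)×N matrix whose first m rows are orthonormal vectors ⟨1|,...,⟨m| and whose last n rows are orthonormal vectors ⟨a_1|,...,⟨a_n| (each family orthonormal in ℂ^N). Let A be the n×m matrix with entries A_{ij} = ⟨a_i|j⟩. Then the nonzero eigenvalues of M = C†C = Σ_{i=1}^m |i⟩⟨i| + Σ_{j=1}^n |a_j⟩⟨a_j| are contained in the multiset {1 + σ_k(A)} ∪ {1 − σ_k(A)} ∪ {1,...,1}, i.e., the vector of eigenvalues of M equals (1 + σ(A)) ⊕ (1 − σ(A)) padded with entries 1 and 0 to length N, where σ(A) denotes the singular values of A. -/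
open Matrix BigOperators

noncomputable def singvals {a b : ℕ} (M : Matrix (Fin a) (Fin b) ℂ) : Fin b → ℝ :=
  fun i => Real.sqrt ((Matrix.isHermitian_conjTranspose_mul_self M).eigenvalues i)

open Polynomial

lemma my_charpoly_conj {k : Type*} [Fintype k] [DecidableEq k]
    (U V B : Matrix k k ℂ) (hUV : U * V = 1) :
    (U * B * V).charpoly = B.charpoly := by
  have hmap : (C : ℂ →+* ℂ[X]).mapMatrix U * (C : ℂ →+* ℂ[X]).mapMatrix V = 1 := by
    rw [← _root_.map_mul, hUV, _root_.map_one]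
  have h1 : charmatrix (U * B * V)
      = (C : ℂ →+* ℂ[X]).mapMatrix U * charmatrix B * (C : ℂ →+* ℂ[X]).mapMatrix V := by
    rw [charmatrix, charmatrix, Matrix.mul_sub, Matrix.sub_mul, _root_.map_mul, _root_.map_mul]
    congr 1
    symm
    have hc : Commute (Matrix.scalar k (X : ℂ[X])) ((C : ℂ →+* ℂ[X]).mapMatrix U) :=
      Matrix.scalar_commute _ (fun r => Commute.all _ _) _
    calc (C : ℂ →+* ℂ[X]).mapMatrix U * Matrix.scalar k (X : ℂ[X]) * (C : ℂ →+* ℂ[X]).mapMatrix V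
        = Matrix.scalar k (X : ℂ[X]) * ((C : ℂ →+* ℂ[X]).mapMatrix U * (C : ℂ →+* ℂ[X]).mapMatrix V) := by
          rw [← hc.eq, mul_assoc]
      _ = Matrix.scalar k (X : ℂ[X]) := by rw [hmap, mul_one]
  have h2 := congrArg Matrix.det h1
  rw [Matrix.charpoly, Matrix.charpoly, h2, Matrix.det_mul, Matrix.det_mul]
  have : ((C : ℂ →+* ℂ[X]).mapMatrix U).det * ((C : ℂ →+* ℂ[X]).mapMatrix V).det = 1 := by
    rw [← Matrix.det_mul, hmap, Matrix.det_one]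
  calc ((C : ℂ →+* ℂ[X]).mapMatrix U).det * (charmatrix B).det * ((C : ℂ →+* ℂ[X]).mapMatrix V).det
      = (charmatrix B).det * (((C : ℂ →+* ℂ[X]).mapMatrix U).det * ((C : ℂ →+* ℂ[X]).mapMatrix V).det) := by ring
    _ = (charmatrix B).det := by rw [this, mul_one]

lemma my_charpoly_diagonal {k : Type*} [Fintype k] [DecidableEq k] (d : k → ℂ) :
    (Matrix.diagonal d).charpoly = ∏ i, (X - C (d i)) := by
  have h : charmatrix (Matrix.diagonal d) = Matrix.diagonal fun i => (X : ℂ[X]) - C (d i) := by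
    rw [charmatrix, RingHom.mapMatrix_apply]
    rw [Matrix.diagonal_map (map_zero _)]
    ext i j
    by_cases hij : i = j <;> simp [Matrix.scalar_apply, hij, Matrix.diagonal_apply]
  rw [Matrix.charpoly, h, Matrix.det_diagonal]

lemma my_charpoly_hermitian {k : Type*} [Fintype k] [DecidableEq k]
    {B : Matrix k k ℂ} (hB : B.IsHermitian) :
    B.charpoly = ∏ i, (X - C ((hB.eigenvalues i : ℝ) : ℂ)) := by
  have hs := hB.spectral_theorem
  have hUV : (Matrix.IsHermitian.eigenvectorUnitary hB : Matrix k k ℂ) *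
      (star (Matrix.IsHermitian.eigenvectorUnitary hB : Matrix k k ℂ)) = 1 :=
    (Matrix.mem_unitaryGroup_iff).mp (Matrix.IsHermitian.eigenvectorUnitary hB).2
  calc B.charpoly = ((Matrix.IsHermitian.eigenvectorUnitary hB : Matrix k k ℂ) *
        Matrix.diagonal (RCLike.ofReal ∘ hB.eigenvalues) *
        (star (Matrix.IsHermitian.eigenvectorUnitary hB : Matrix k k ℂ))).charpoly := by conv_lhs => rw [hs, Unitary.conjStarAlgAut_apply]
    _ = (Matrix.diagonal (RCLike.ofReal ∘ hB.eigenvalues)).charpoly := my_charpoly_conj _ _ _ hUV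
    _ = ∏ i, (X - C ((hB.eigenvalues i : ℝ) : ℂ)) := my_charpoly_diagonal _

lemma my_roots_hermitian {k : Type*} [Fintype k] [DecidableEq k]
    {B : Matrix k k ℂ} (hB : B.IsHermitian) :
    B.charpoly.roots = Multiset.map (fun i => ((hB.eigenvalues i : ℝ) : ℂ)) Finset.univ.val := by
  rw [my_charpoly_hermitian hB]
  have : (∏ i, (X - C ((hB.eigenvalues i : ℝ) : ℂ)))
      = ((Multiset.map (fun i => ((hB.eigenvalues i : ℝ) : ℂ)) Finset.univ.val).map
          (fun a => X - C a)).prod := by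
    rw [Multiset.map_map]; rfl
  rw [this, Polynomial.roots_multiset_prod_X_sub_C]

lemma my_eval_charpoly {k : Type*} [Fintype k] [DecidableEq k]
    (B : Matrix k k ℂ) (x : ℂ) :
    (B.charpoly).eval x = (Matrix.diagonal (fun _ => x) - B).det := by
  rw [Matrix.charpoly, _root_.eval_det, matPolyEquiv_charmatrix, eval_sub, eval_X, eval_C,
    Matrix.scalar_apply]

lemma my_diag_sub {k : Type*} [Fintype k] [DecidableEq k] (x : ℂ) (hx : x ≠ 0)
    (R : Matrix k k ℂ) :
    Matrix.diagonal (fun _ : k => x) - R = x • ((1 : Matrix k k ℂ) - x⁻¹ • R) := by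
  rw [smul_sub, smul_smul, mul_inv_cancel₀ hx, one_smul, Matrix.smul_one_eq_diagonal]

lemma my_charpoly_mul_comm {a b : Type*} [Fintype a] [Fintype b] [DecidableEq a] [DecidableEq b]
    (P : Matrix a b ℂ) (Q : Matrix b a ℂ) :
    X ^ (Fintype.card b) * (P * Q).charpoly = X ^ (Fintype.card a) * (Q * P).charpoly := by
  apply Polynomial.eq_of_infinite_eval_eq
  apply Set.Infinite.mono (s := {x : ℂ | x ≠ 0})
  swap
  · have : {x : ℂ | x ≠ 0} = ({0} : Set ℂ)ᶜ := by ext x; simp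
    rw [this]
    exact (Set.finite_singleton 0).infinite_compl
  intro x hx
  have hx : x ≠ 0 := hx
  simp only [Set.mem_setOf_eq, eval_mul, eval_pow, eval_X, my_eval_charpoly]
  rw [my_diag_sub x hx (P * Q), my_diag_sub x hx (Q * P), Matrix.det_smul, Matrix.det_smul]
  have h1 : (1 : Matrix a a ℂ) - x⁻¹ • (P * Q) = 1 - (x⁻¹ • P) * Q := by
    rw [Matrix.smul_mul]
  have h2 : (1 : Matrix b b ℂ) - x⁻¹ • (Q * P) = 1 - Q * (x⁻¹ • P) := by
    rw [Matrix.mul_smul]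
  have h3 : ((1 : Matrix a a ℂ) - (x⁻¹ • P) * Q).det = ((1 : Matrix b b ℂ) - Q * (x⁻¹ • P)).det := by
    have e := Matrix.det_one_add_mul_comm (-(x⁻¹ • P)) Q
    simpa [neg_mul, mul_neg, ← sub_eq_add_neg] using e
  rw [h1, h2, h3]
  ring

lemma my_block_charpoly {a b : Type*} [Fintype a] [Fintype b] [DecidableEq a] [DecidableEq b]
    (A : Matrix a b ℂ) :
    (Matrix.fromBlocks (1 : Matrix b b ℂ) Aᴴ A (1 : Matrix a a ℂ)).charpoly
        * (X - C 1) ^ (Fintype.card b)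
      = (X - C 1) ^ (Fintype.card a) *
        ∏ j : b, ((X - C (1 + (Real.sqrt ((Matrix.isHermitian_conjTranspose_mul_self A).eigenvalues j) : ℂ)))
          * (X - C (1 - (Real.sqrt ((Matrix.isHermitian_conjTranspose_mul_self A).eigenvalues j) : ℂ)))) := by
  set σ : b → ℝ := fun j => Real.sqrt ((Matrix.isHermitian_conjTranspose_mul_self A).eigenvalues j) with hσ
  apply Polynomial.eq_of_infinite_eval_eq
  apply Set.Infinite.mono (s := {x : ℂ | x ≠ 1})
  swap
  · have : {x : ℂ | x ≠ 1} = ({1} : Set ℂ)ᶜ := by ext x; simp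
    rw [this]
    exact (Set.finite_singleton 1).infinite_compl
  intro x hx
  have hx : x ≠ 1 := hx
  set y : ℂ := x - 1 with hy
  have hy0 : y ≠ 0 := sub_ne_zero.mpr hx
  simp only [Set.mem_setOf_eq, eval_mul, eval_pow, eval_sub, eval_X, eval_C, eval_one,
    my_eval_charpoly, eval_prod]
  -- block decomposition
  have hblock : Matrix.diagonal (fun _ : b ⊕ a => x)
        - Matrix.fromBlocks (1 : Matrix b b ℂ) Aᴴ A (1 : Matrix a a ℂ)
      = Matrix.fromBlocks (y • (1 : Matrix b b ℂ)) (-Aᴴ) (-A) (y • (1 : Matrix a a ℂ)) := by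
    ext i j
    rcases i with i | i <;> rcases j with j | j
    · by_cases hij : i = j <;>
        simp [Matrix.fromBlocks, Matrix.diagonal_apply, Matrix.one_apply, hij, hy, smul_eq_mul,
          Matrix.sub_apply, sub_ne_zero]
    · simp [Matrix.fromBlocks, Matrix.diagonal_apply, Matrix.sub_apply]
    · simp [Matrix.fromBlocks, Matrix.diagonal_apply, Matrix.sub_apply]
    · by_cases hij : i = j <;>
        simp [Matrix.fromBlocks, Matrix.diagonal_apply, Matrix.one_apply, hij, hy, smul_eq_mul,
          Matrix.sub_apply, sub_ne_zero]
  rw [hblock]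
  letI : Invertible (y • (1 : Matrix a a ℂ)) :=
    ⟨y⁻¹ • (1 : Matrix a a ℂ), by
      rw [Matrix.smul_mul, Matrix.mul_smul, smul_smul, inv_mul_cancel₀ hy0, Matrix.mul_one, one_smul], by
      rw [Matrix.smul_mul, Matrix.mul_smul, smul_smul, mul_inv_cancel₀ hy0, Matrix.mul_one, one_smul]⟩
  rw [Matrix.det_fromBlocks₂₂]
  have hinv : (⅟ (y • (1 : Matrix a a ℂ))) = y⁻¹ • (1 : Matrix a a ℂ) := rfl
  have hS : y • (1 : Matrix b b ℂ) - -Aᴴ * ⅟ (y • (1 : Matrix a a ℂ)) * -A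
      = y • (1 : Matrix b b ℂ) - y⁻¹ • (Aᴴ * A) := by
    rw [hinv, Matrix.mul_smul, Matrix.mul_one, Matrix.smul_mul]
    simp [Matrix.neg_mul, Matrix.mul_neg, neg_neg]
  rw [hS]
  have hdet1 : (y • (1 : Matrix a a ℂ)).det = y ^ Fintype.card a := by
    rw [Matrix.det_smul, Matrix.det_one, mul_one]
  rw [hdet1]
  have hfactor : (y • (1 : Matrix b b ℂ) - y⁻¹ • (Aᴴ * A)).det * y ^ Fintype.card b
      = ((y * y) • (1 : Matrix b b ℂ) - Aᴴ * A).det := by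
    have : (y * y) • (1 : Matrix b b ℂ) - Aᴴ * A
        = y • (y • (1 : Matrix b b ℂ) - y⁻¹ • (Aᴴ * A)) := by
      rw [smul_sub, smul_smul, smul_smul, mul_inv_cancel₀ hy0, one_smul]
    rw [this, Matrix.det_smul, mul_comm]
  have hev : ((y * y) • (1 : Matrix b b ℂ) - Aᴴ * A).det
      = ∏ j : b, ((y * y) - ((σ j : ℂ))^2) := by
    rw [Matrix.smul_one_eq_diagonal, ← my_eval_charpoly,
      my_charpoly_hermitian (Matrix.isHermitian_conjTranspose_mul_self A)]
    rw [eval_prod]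
    refine Finset.prod_congr rfl fun j _ => ?_
    have hnn : 0 ≤ (Matrix.isHermitian_conjTranspose_mul_self A).eigenvalues j :=
      Matrix.eigenvalues_conjTranspose_mul_self_nonneg A j
    have : ((Matrix.isHermitian_conjTranspose_mul_self A).eigenvalues j : ℂ) = ((σ j : ℂ))^2 := by
      rw [hσ]
      norm_cast
      rw [Real.sq_sqrt hnn]
    simp [this]
  calc (y ^ Fintype.card a * (y • (1 : Matrix b b ℂ) - y⁻¹ • (Aᴴ * A)).det) * (x - 1) ^ Fintype.card b
      = y ^ Fintype.card a * ((y • (1 : Matrix b b ℂ) - y⁻¹ • (Aᴴ * A)).det * y ^ Fintype.card b) := by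
        rw [← hy]; ring
    _ = y ^ Fintype.card a * ∏ j : b, ((y * y) - ((σ j : ℂ))^2) := by rw [hfactor, hev]
    _ = (x - 1) ^ Fintype.card a * ∏ j : b, ((x - (1 + (σ j : ℂ))) * (x - (1 - (σ j : ℂ)))) := by
        rw [← hy]
        congr 1
        refine Finset.prod_congr rfl fun j _ => ?_
        rw [hy]
        ring

lemma my_eigenvalues_congr {k : Type*} [Fintype k] [DecidableEq k]
    {B B' : Matrix k k ℂ} (h : B = B') (hB : B.IsHermitian) (hB' : B'.IsHermitian) :
    hB.eigenvalues = hB'.eigenvalues := by subst h; rfl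

lemma my_roots_charpoly_mul_comm {a b : Type} [Fintype a] [Fintype b] [DecidableEq a] [DecidableEq b]
    (P : Matrix a b ℂ) (Q : Matrix b a ℂ) :
    Multiset.replicate (Fintype.card b) (0:ℂ) + (P * Q).charpoly.roots
      = Multiset.replicate (Fintype.card a) (0:ℂ) + (Q * P).charpoly.roots := by
  have h := congrArg Polynomial.roots (my_charpoly_mul_comm P Q)
  have hne1 : (X : ℂ[X]) ^ (Fintype.card b) * (P * Q).charpoly ≠ 0 :=
    ((monic_X.pow _).mul (Matrix.charpoly_monic _)).ne_zero
  have hne2 : (X : ℂ[X]) ^ (Fintype.card a) * (Q * P).charpoly ≠ 0 :=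
    ((monic_X.pow _).mul (Matrix.charpoly_monic _)).ne_zero
  rw [Polynomial.roots_mul hne1, Polynomial.roots_mul hne2, Polynomial.roots_pow,
    Polynomial.roots_pow, Polynomial.roots_X] at h
  simpa [Multiset.nsmul_singleton] using h

lemma my_sv_padding {n m : ℕ} (A : Matrix (Fin n) (Fin m) ℂ) :
    Multiset.map (singvals Aᴴ) Finset.univ.val + Multiset.replicate m (0:ℝ)
      = Multiset.map (singvals A) Finset.univ.val + Multiset.replicate n (0:ℝ) := by
  have h1 : (Aᴴ * A).IsHermitian := Matrix.isHermitian_conjTranspose_mul_self A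
  have h2 : (A * Aᴴ).IsHermitian := Matrix.isHermitian_mul_conjTranspose_self A
  have h := my_roots_charpoly_mul_comm Aᴴ A
  rw [my_roots_hermitian h1, my_roots_hermitian h2] at h
  simp only [Fintype.card_fin] at h
  -- pull back along Complex.ofReal
  have h' : Multiset.replicate n (0:ℝ) + Multiset.map h1.eigenvalues Finset.univ.val
      = Multiset.replicate m (0:ℝ) + Multiset.map h2.eigenvalues Finset.univ.val := by
    apply Multiset.map_injective (f := fun r : ℝ => (r : ℂ)) Complex.ofReal_injective
    simpa [Multiset.map_map, Function.comp_def] using h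
  have h'' := congrArg (Multiset.map Real.sqrt) h'
  simp only [Multiset.map_add, Multiset.map_replicate, Real.sqrt_zero, Multiset.map_map] at h''
  have e1 : Real.sqrt ∘ h1.eigenvalues = singvals A := rfl
  have e2 : Real.sqrt ∘ h2.eigenvalues = singvals Aᴴ := by
    funext i
    have hc : Aᴴᴴ * Aᴴ = A * Aᴴ := by rw [conjTranspose_conjTranspose]
    simp only [Function.comp_apply, singvals]
    rw [my_eigenvalues_congr hc (Matrix.isHermitian_conjTranspose_mul_self Aᴴ) h2]
  rw [e1, e2] at h''
  rw [add_comm (Multiset.map (singvals Aᴴ) Finset.univ.val), add_comm (Multiset.map (singvals A) Finset.univ.val)]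
  exact h''.symm

lemma my_roots_prod_X_sub_C {k : Type*} [Fintype k] (f : k → ℂ) :
    (∏ i, (X - C (f i))).roots = Multiset.map f Finset.univ.val := by
  have : (∏ i, (X - C (f i))) = ((Multiset.map f Finset.univ.val).map (fun a => X - C a)).prod := by
    rw [Multiset.map_map]; rfl
  rw [this, Polynomial.roots_multiset_prod_X_sub_C]

lemma my_block_roots {a b : Type} [Fintype a] [Fintype b] [DecidableEq a] [DecidableEq b]
    (A : Matrix a b ℂ)
    (σ : b → ℝ)
    (hσ : σ = fun j => Real.sqrt ((Matrix.isHermitian_conjTranspose_mul_self A).eigenvalues j)) :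
    (Matrix.fromBlocks (1 : Matrix b b ℂ) Aᴴ A (1 : Matrix a a ℂ)).charpoly.roots
        + Multiset.replicate (Fintype.card b) (1:ℂ)
      = Multiset.replicate (Fintype.card a) (1:ℂ)
        + Multiset.map (fun j => 1 + ((σ j : ℝ) : ℂ)) Finset.univ.val
        + Multiset.map (fun j => 1 - ((σ j : ℝ) : ℂ)) Finset.univ.val := by
  subst hσ
  have h := congrArg Polynomial.roots (my_block_charpoly A)
  have hm1 : ((Matrix.fromBlocks (1 : Matrix b b ℂ) Aᴴ A (1 : Matrix a a ℂ)).charpoly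
      * (X - C 1) ^ (Fintype.card b)) ≠ 0 :=
    ((Matrix.charpoly_monic _).mul ((monic_X_sub_C (1:ℂ)).pow _)).ne_zero
  have hsplit : ∏ j : b, ((X - C (1 + (Real.sqrt ((Matrix.isHermitian_conjTranspose_mul_self A).eigenvalues j) : ℂ)))
          * (X - C (1 - (Real.sqrt ((Matrix.isHermitian_conjTranspose_mul_self A).eigenvalues j) : ℂ))))
      = (∏ j : b, (X - C (1 + (Real.sqrt ((Matrix.isHermitian_conjTranspose_mul_self A).eigenvalues j) : ℂ))))
        * ∏ j : b, (X - C (1 - (Real.sqrt ((Matrix.isHermitian_conjTranspose_mul_self A).eigenvalues j) : ℂ))) :=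
    Finset.prod_mul_distrib
  have hm2 : ((X - C (1:ℂ)) ^ (Fintype.card a) *
      ∏ j : b, ((X - C (1 + (Real.sqrt ((Matrix.isHermitian_conjTranspose_mul_self A).eigenvalues j) : ℂ)))
        * (X - C (1 - (Real.sqrt ((Matrix.isHermitian_conjTranspose_mul_self A).eigenvalues j) : ℂ))))) ≠ 0 := by
    refine (((monic_X_sub_C (1:ℂ)).pow _).mul ?_).ne_zero
    exact monic_prod_of_monic _ _ fun j _ => (monic_X_sub_C _).mul (monic_X_sub_C _)
  rw [Polynomial.roots_mul hm1, Polynomial.roots_mul hm2] at h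
  rw [hsplit] at h
  have hm3 : (∏ j : b, (X - C (1 + (Real.sqrt ((Matrix.isHermitian_conjTranspose_mul_self A).eigenvalues j) : ℂ))))
      * (∏ j : b, (X - C (1 - (Real.sqrt ((Matrix.isHermitian_conjTranspose_mul_self A).eigenvalues j) : ℂ)))) ≠ 0 :=
    ((monic_prod_of_monic _ _ fun j _ => monic_X_sub_C _).mul
      (monic_prod_of_monic _ _ fun j _ => monic_X_sub_C _)).ne_zero
  rw [Polynomial.roots_mul hm3, Polynomial.roots_pow, Polynomial.roots_pow,
    Polynomial.roots_X_sub_C, my_roots_prod_X_sub_C, my_roots_prod_X_sub_C] at h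
  simp only [Multiset.nsmul_singleton] at h
  rw [h]
  rw [add_assoc]

/-- The nonzero eigenvalues of `M = Σ|i⟩⟨i| + Σ|a_j⟩⟨a_j|` are contained in the multiset
`{1 + σ_k(A)} ∪ {1 − σ_k(A)}` (which, via the zero singular values, includes the padding 1's). -/
theorem stmt0 {N m n : ℕ}
    (u : Fin m → Fin N → ℂ) (w : Fin n → Fin N → ℂ)
    (hu : ∀ i j, star (u i) ⬝ᵥ u j = if i = j then 1 else 0)
    (hw : ∀ i j, star (w i) ⬝ᵥ w j = if i = j then 1 else 0)
    (A : Matrix (Fin n) (Fin m) ℂ)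
    (hA : ∀ i j, A i j = star (w i) ⬝ᵥ u j)
    (M : Matrix (Fin N) (Fin N) ℂ)
    (hM : M = (∑ i, vecMulVec (u i) (star (u i))) + ∑ i, vecMulVec (w i) (star (w i)))
    (hHerm : M.IsHermitian) :
    (Multiset.map hHerm.eigenvalues Finset.univ.val).filter (fun x => x ≠ 0) ≤
      Multiset.map (fun j => 1 + singvals A j) Finset.univ.val
        + Multiset.map (fun i => 1 - singvals Aᴴ i) Finset.univ.val := by
  classical
  set CC : Matrix (Fin N) (Fin m ⊕ Fin n) ℂ :=
    Matrix.of fun k s => Sum.elim (fun i => u i k) (fun j => w j k) s with hCC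
  have hMC : M = CC * CCᴴ := by
    rw [hM]
    ext p q
    simp only [Matrix.mul_apply, Matrix.add_apply, Matrix.sum_apply, Matrix.vecMulVec_apply,
      Matrix.conjTranspose_apply, hCC, Matrix.of_apply, Fintype.sum_sum_type, Sum.elim_inl,
      Sum.elim_inr, Pi.star_apply]
  have hG : CCᴴ * CC = Matrix.fromBlocks (1 : Matrix (Fin m) (Fin m) ℂ) Aᴴ A
      (1 : Matrix (Fin n) (Fin n) ℂ) := by
    ext s t
    rcases s with i | i <;> rcases t with j | j
    · have := hu i j
      simp only [dotProduct, Pi.star_apply] at this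
      simp only [Matrix.mul_apply, Matrix.conjTranspose_apply, hCC, Matrix.of_apply,
        Sum.elim_inl, Matrix.fromBlocks_apply₁₁, Matrix.one_apply]
      simpa using this
    · have := hA j i
      simp only [dotProduct, Pi.star_apply] at this
      simp only [Matrix.mul_apply, Matrix.conjTranspose_apply, hCC, Matrix.of_apply,
        Sum.elim_inl, Sum.elim_inr, Matrix.fromBlocks_apply₁₂, Matrix.conjTranspose_apply, this]
      rw [star_sum]
      refine Finset.sum_congr rfl fun p _ => ?_
      simp [StarMul.star_mul, mul_comm]
    · have := hA i j
      simp only [dotProduct, Pi.star_apply] at this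
      simp only [Matrix.mul_apply, Matrix.conjTranspose_apply, hCC, Matrix.of_apply,
        Sum.elim_inl, Sum.elim_inr, Matrix.fromBlocks_apply₂₁, this]
    · have := hw i j
      simp only [dotProduct, Pi.star_apply] at this
      simp only [Matrix.mul_apply, Matrix.conjTranspose_apply, hCC, Matrix.of_apply,
        Sum.elim_inr, Matrix.fromBlocks_apply₂₂, Matrix.one_apply]
      simpa using this
  -- main multiset identity over ℂ
  have key := my_roots_charpoly_mul_comm CC CCᴴ
  rw [← hMC, hG] at key
  rw [my_roots_hermitian hHerm] at key
  simp only [Fintype.card_sum, Fintype.card_fin] at key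
  -- block roots
  have hblock := my_block_roots A (singvals A) rfl
  simp only [Fintype.card_fin] at hblock
  -- padding identity mapped by 1 - t
  have hpad := congrArg (Multiset.map (fun t : ℝ => 1 - ((t : ℝ) : ℂ))) (my_sv_padding A)
  simp only [Multiset.map_add, Multiset.map_replicate, Complex.ofReal_zero, sub_zero,
    Multiset.map_map, Function.comp] at hpad
  -- conclude roots of G
  have hGroots : (Matrix.fromBlocks (1 : Matrix (Fin m) (Fin m) ℂ) Aᴴ A
        (1 : Matrix (Fin n) (Fin n) ℂ)).charpoly.roots
      = Multiset.map (fun j => 1 + ((singvals A j : ℝ) : ℂ)) Finset.univ.val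
        + Multiset.map (fun j => 1 - ((singvals Aᴴ j : ℝ) : ℂ)) Finset.univ.val := by
    have h2 : Multiset.map (fun j => 1 - ((singvals Aᴴ j : ℝ) : ℂ)) Finset.univ.val
          + Multiset.replicate m (1:ℂ)
        = Multiset.map (fun j => 1 - ((singvals A j : ℝ) : ℂ)) Finset.univ.val
          + Multiset.replicate n (1:ℂ) := by
      simpa using hpad
    have h3 : (Matrix.fromBlocks (1 : Matrix (Fin m) (Fin m) ℂ) Aᴴ A
          (1 : Matrix (Fin n) (Fin n) ℂ)).charpoly.roots + Multiset.replicate m (1:ℂ)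
        = (Multiset.map (fun j => 1 + ((singvals A j : ℝ) : ℂ)) Finset.univ.val
            + Multiset.map (fun j => 1 - ((singvals Aᴴ j : ℝ) : ℂ)) Finset.univ.val)
            + Multiset.replicate m (1:ℂ) := by
      rw [hblock, add_assoc _ _ (Multiset.replicate m (1:ℂ)), h2]
      abel
    exact add_right_cancel h3
  rw [hGroots] at key
  -- pull back to ℝ
  have hreal : Multiset.replicate (m + n) (0:ℝ) + Multiset.map hHerm.eigenvalues Finset.univ.val
      = Multiset.replicate N (0:ℝ)
        + (Multiset.map (fun j => 1 + singvals A j) Finset.univ.val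
          + Multiset.map (fun i => 1 - singvals Aᴴ i) Finset.univ.val) := by
    apply Multiset.map_injective (f := fun r : ℝ => (r : ℂ)) Complex.ofReal_injective
    simpa [Multiset.map_add, Multiset.map_replicate, Multiset.map_map, Function.comp_def,
      Complex.ofReal_add, Complex.ofReal_one, Complex.ofReal_sub] using key
  have hfilter := congrArg (Multiset.filter (fun x : ℝ => x ≠ 0)) hreal
  simp only [Multiset.filter_add] at hfilter
  have hrep : ∀ k : ℕ, Multiset.filter (fun x : ℝ => x ≠ 0) (Multiset.replicate k (0:ℝ)) = 0 := by
    intro k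
    rw [Multiset.filter_eq_nil]
    intro a ha
    rw [Multiset.eq_of_mem_replicate ha]
    simp
  rw [hrep, hrep, zero_add, zero_add] at hfilter
  rw [hfilter]
  exact add_le_add (Multiset.filter_le _ _) (Multiset.filter_le _ _)
end

section
/- If p ⊕ q ≺ W^{(λ)}, then for any 0 ≤ α < 1 the Rényi entropies satisfy H_α(p) + H_α(q) ≥ (1/(1−α)) ln(Σ_i (W^{(λ)}_i)^α − 1), where H_α(x) = (1/(1−α)) ln(Σ_i x_i^α). -/
open Matrix BigOperators

noncomputable def opNorm {a b : ℕ} (M : Matrix (Fin a) (Fin b) ℂ) : ℝ :=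
  ⨆ i, singvals M i

noncomputable def sCoef {N : ℕ} (U : Matrix (Fin N) (Fin N) ℂ) (k : ℕ) : ℝ :=
  sSup {x | ∃ (a b : ℕ) (r : Fin a → Fin N) (c : Fin b → Fin N),
    Function.Injective r ∧ Function.Injective c ∧ a + b = k + 1 ∧
    x = opNorm (U.submatrix r c)}

def pad {n : ℕ} (x : Fin n → ℝ) : ℕ → ℝ := fun k => if h : k < n then x ⟨k, h⟩ else 0

noncomputable def maxPartialSum {n : ℕ} (x : Fin n → ℝ) (k : ℕ) : ℝ :=
  sSup {t : ℝ | ∃ A : Finset (Fin n), A.card ≤ k ∧ t = ∑ i ∈ A, x i}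

def Majorizes {m n : ℕ} (x : Fin m → ℝ) (y : Fin n → ℝ) : Prop :=
  (∀ k, maxPartialSum x k ≤ maxPartialSum y k) ∧ ∑ i, x i = ∑ i, y i

noncomputable def Svec (l s : ℕ → ℝ) (k : ℕ) : ℝ :=
  if k % 2 = 0 then
    (∑ j ∈ Finset.range (k / 2), l j * (1 + s (k - 1 - j)))
      + ∑ j ∈ Finset.Ico (k / 2) k, l j * (1 - s j)
  else
    (∑ j ∈ Finset.range (k / 2), l j * (1 + s (k - 1 - j)))
      + l (k / 2)
      + ∑ j ∈ Finset.Ico (k / 2 + 1) k, l j * (1 - s j)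

section Aux

open MeasureTheory Set intervalIntegral

lemma mps_finite {n k : ℕ} (x : Fin n → ℝ) :
    Set.Finite {t : ℝ | ∃ A : Finset (Fin n), A.card ≤ k ∧ t = ∑ i ∈ A, x i} := by
  apply Set.Finite.subset (Set.finite_range (fun A : Finset (Fin n) => ∑ i ∈ A, x i))
  rintro t ⟨A, -, rfl⟩; exact ⟨A, rfl⟩

lemma le_mps {n k : ℕ} (x : Fin n → ℝ) (A : Finset (Fin n)) (hA : A.card ≤ k) :
    ∑ i ∈ A, x i ≤ maxPartialSum x k :=
  le_csSup (mps_finite x).bddAbove ⟨A, hA, rfl⟩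

lemma mps_attained {n k : ℕ} (x : Fin n → ℝ) :
    ∃ A : Finset (Fin n), A.card ≤ k ∧ maxPartialSum x k = ∑ i ∈ A, x i := by
  have h : maxPartialSum x k ∈ {t : ℝ | ∃ A : Finset (Fin n), A.card ≤ k ∧ t = ∑ i ∈ A, x i} :=
    Set.Nonempty.csSup_mem ⟨0, ⟨∅, by simp⟩⟩ (mps_finite x)
  exact h

lemma sum_posPart_le {m n : ℕ} (x : Fin m → ℝ) (y : Fin n → ℝ)
    (hk : ∀ k, maxPartialSum x k ≤ maxPartialSum y k) {t : ℝ} (ht : 0 ≤ t) :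
    ∑ i, max (x i - t) 0 ≤ ∑ j, max (y j - t) 0 := by
  classical
  set A := Finset.univ.filter (fun i => t < x i) with hA
  have h1 : ∑ i, max (x i - t) 0 = ∑ i ∈ A, (x i - t) := by
    rw [Finset.sum_filter]
    apply Finset.sum_congr rfl
    intro i _
    rcases lt_or_ge t (x i) with h | h
    · simp [h, max_eq_left (by linarith : (0:ℝ) ≤ x i - t)]
    · simp [not_lt.2 h, max_eq_right (by linarith : x i - t ≤ 0)]
  obtain ⟨B, hB, hBe⟩ := mps_attained y (k := A.card)
  have h2 : ∑ i ∈ A, x i ≤ ∑ j ∈ B, y j := by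
    calc ∑ i ∈ A, x i ≤ maxPartialSum x A.card := le_mps x A le_rfl
    _ ≤ maxPartialSum y A.card := hk _
    _ = ∑ j ∈ B, y j := hBe
  have h3 : ∑ j ∈ B, (y j - t) ≤ ∑ j, max (y j - t) 0 := by
    apply le_trans (Finset.sum_le_sum (fun j _ => le_max_left (y j - t) 0))
    exact Finset.sum_le_sum_of_subset_of_nonneg (Finset.subset_univ B)
      (fun j _ _ => le_max_right _ _)
  have h4 : (B.card : ℝ) * t ≤ (A.card : ℝ) * t :=
    mul_le_mul_of_nonneg_right (by exact_mod_cast hB) ht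
  rw [h1]
  have e1 : ∑ i ∈ A, (x i - t) = ∑ i ∈ A, x i - A.card * t := by
    rw [Finset.sum_sub_distrib, Finset.sum_const, nsmul_eq_mul]
  have e2 : ∑ j ∈ B, (y j - t) = ∑ j ∈ B, y j - B.card * t := by
    rw [Finset.sum_sub_distrib, Finset.sum_const, nsmul_eq_mul]
  linarith

lemma sum_min_le {m n : ℕ} (x : Fin m → ℝ) (y : Fin n → ℝ)
    (hk : ∀ k, maxPartialSum x k ≤ maxPartialSum y k) (hsum : ∑ i, x i = ∑ j, y j)
    {t : ℝ} (ht : 0 ≤ t) :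
    ∑ j, min (y j) t ≤ ∑ i, min (x i) t := by
  have key : ∀ (a : ℝ), min a t = a - max (a - t) 0 := by
    intro a
    rcases le_or_gt a t with h | h
    · simp [min_eq_left h, max_eq_right (by linarith : a - t ≤ 0)]
    · simp [min_eq_right h.le, max_eq_left (by linarith : (0:ℝ) ≤ a - t)]
  simp only [key]
  rw [Finset.sum_sub_distrib, Finset.sum_sub_distrib]
  have := sum_posPart_le x y hk ht
  linarith [hsum]

lemma min_rpow_int {α : ℝ} (h0 : 0 < α) (h1 : α < 1) {c : ℝ} (hc : 0 ≤ c) :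
    IntegrableOn (fun t : ℝ => min c t * t ^ (α - 2)) (Ioi 0) ∧
    ∫ t in Ioi 0, min c t * t ^ (α - 2) = c ^ α / (α * (1 - α)) := by
  have h1α : (1:ℝ) - α ≠ 0 := by linarith
  rcases eq_or_lt_of_le hc with rfl | hc
  · constructor
    · apply (integrableOn_zero (s := Ioi 0)).congr_fun ?_ measurableSet_Ioi
      intro t ht
      simp [min_eq_left (le_of_lt (mem_Ioi.mp ht))]
    · rw [Real.zero_rpow h0.ne', setIntegral_congr_fun measurableSet_Ioi
        (g := fun _ => (0:ℝ)) (fun t ht => by simp [min_eq_left (le_of_lt (mem_Ioi.mp ht))])]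
      simp
  · have hunion : Ioc (0:ℝ) c ∪ Ioi c = Ioi 0 := Set.Ioc_union_Ioi_eq_Ioi hc.le
    have hm1 : α - 2 < -1 := by linarith
    have hcα : c * c ^ (α - 1) = c ^ α := by
      calc c * c ^ (α - 1) = c ^ (1:ℝ) * c ^ (α - 1) := by rw [Real.rpow_one]
      _ = c ^ (1 + (α - 1)) := (Real.rpow_add hc _ _).symm
      _ = c ^ α := by ring_nf
    have heq1 : ∀ t ∈ Ioc (0:ℝ) c, min c t * t ^ (α - 2) = t ^ (α - 1) := by
      intro t ht
      have : t ^ (α - 1) = t * t ^ (α - 2) := by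
        rw [show α - 1 = 1 + (α - 2) by ring, Real.rpow_add ht.1, Real.rpow_one]
      simp [min_eq_right ht.2, this]
    have heq2 : ∀ t ∈ Ioi c, min c t * t ^ (α - 2) = c * t ^ (α - 2) := by
      intro t ht
      simp [min_eq_left (le_of_lt (mem_Ioi.mp ht))]
    have hint1 : IntegrableOn (fun t : ℝ => min c t * t ^ (α - 2)) (Ioc 0 c) := by
      have : IntervalIntegrable (fun t : ℝ => t ^ (α - 1)) volume 0 c :=
        intervalIntegrable_rpow' (by linarith)
      have h2 := (intervalIntegrable_iff_integrableOn_Ioc_of_le hc.le).mp this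
      exact h2.congr_fun (fun t ht => (heq1 t ht).symm) measurableSet_Ioc
    have hint2 : IntegrableOn (fun t : ℝ => min c t * t ^ (α - 2)) (Ioi c) := by
      have h2 := (integrableOn_Ioi_rpow_of_lt hm1 hc).const_mul c
      exact MeasureTheory.IntegrableOn.congr_fun h2
        (fun t ht => (heq2 t ht).symm) measurableSet_Ioi
    have hint : IntegrableOn (fun t : ℝ => min c t * t ^ (α - 2)) (Ioi 0) := by
      rw [← hunion]; exact hint1.union hint2
    refine ⟨hint, ?_⟩
    rw [← hunion, setIntegral_union (Set.Ioc_disjoint_Ioi le_rfl) measurableSet_Ioi hint1 hint2]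
    have e1 : ∫ t in Ioc (0:ℝ) c, min c t * t ^ (α - 2) = c ^ α / α := by
      rw [setIntegral_congr_fun measurableSet_Ioc (g := fun t : ℝ => t ^ (α - 1)) heq1]
      rw [← intervalIntegral.integral_of_le hc.le, integral_rpow (Or.inl (by linarith))]
      rw [sub_add_cancel, Real.zero_rpow (by linarith : α ≠ 0)]
      ring_nf
    have e2 : ∫ t in Ioi c, min c t * t ^ (α - 2) = c ^ α / (1 - α) := by
      rw [setIntegral_congr_fun measurableSet_Ioi (g := fun t : ℝ => c * t ^ (α - 2)) heq2]
      rw [MeasureTheory.integral_const_mul, integral_Ioi_rpow_of_lt hm1 hc,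
        show α - 2 + 1 = α - 1 by ring]
      have hαm1 : α - 1 ≠ 0 := by linarith
      rw [show c * (-c ^ (α - 1) / (α - 1)) = (c * c ^ (α - 1)) / (1 - α) by field_simp; ring, hcα]
    rw [e1, e2]
    field_simp
    ring

lemma sum_rpow_le {m n : ℕ} (x : Fin m → ℝ) (y : Fin n → ℝ)
    (hx : ∀ i, 0 ≤ x i) (hy : ∀ j, 0 ≤ y j)
    (hk : ∀ k, maxPartialSum x k ≤ maxPartialSum y k)
    (hsum : ∑ i, x i = ∑ j, y j)
    {α : ℝ} (h0 : 0 < α) (h1 : α < 1) :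
    ∑ j, y j ^ α ≤ ∑ i, x i ^ α := by
  have hc : 0 < α * (1 - α) := by nlinarith
  have hix : IntegrableOn (fun t => ∑ i, min (x i) t * t ^ (α - 2)) (Ioi 0) :=
    integrable_finset_sum _ (fun i _ => (min_rpow_int h0 h1 (hx i)).1)
  have hiy : IntegrableOn (fun t => ∑ j, min (y j) t * t ^ (α - 2)) (Ioi 0) :=
    integrable_finset_sum _ (fun j _ => (min_rpow_int h0 h1 (hy j)).1)
  have ex : ∫ t in Ioi 0, ∑ i, min (x i) t * t ^ (α - 2) = (∑ i, x i ^ α) / (α * (1 - α)) := by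
    rw [integral_finset_sum _ (fun i _ => (min_rpow_int h0 h1 (hx i)).1),
      Finset.sum_congr rfl (fun i _ => (min_rpow_int h0 h1 (hx i)).2), ← Finset.sum_div]
  have ey : ∫ t in Ioi 0, ∑ j, min (y j) t * t ^ (α - 2) = (∑ j, y j ^ α) / (α * (1 - α)) := by
    rw [integral_finset_sum _ (fun j _ => (min_rpow_int h0 h1 (hy j)).1),
      Finset.sum_congr rfl (fun j _ => (min_rpow_int h0 h1 (hy j)).2), ← Finset.sum_div]
  have hmono : (∑ j, y j ^ α) / (α * (1 - α)) ≤ (∑ i, x i ^ α) / (α * (1 - α)) := by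
    rw [← ex, ← ey]
    apply setIntegral_mono_on hiy hix measurableSet_Ioi
    intro t ht
    have ht0 : (0:ℝ) < t := mem_Ioi.mp ht
    rw [← Finset.sum_mul, ← Finset.sum_mul]
    exact mul_le_mul_of_nonneg_right (sum_min_le x y hk hsum ht0.le)
      (Real.rpow_nonneg ht0.le _)
  have := mul_le_mul_of_nonneg_right hmono (le_of_lt hc)
  rwa [div_mul_cancel₀ _ hc.ne', div_mul_cancel₀ _ hc.ne'] at this

end Aux

/-- Rényi entropy uncertainty relation from majorization, order 0 ≤ α < 1. -/
theorem stmt9 {N : ℕ} (p q : Fin N → ℝ) (W : Fin (2 * N) → ℝ)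
    (hp : ∀ i, 0 ≤ p i) (hq : ∀ i, 0 ≤ q i)
    (hps : ∑ i, p i = 1) (hqs : ∑ i, q i = 1)
    (hW : ∀ k, 0 ≤ W k) (hWs : ∑ k, W k = 2)
    (hmaj : Majorizes (Fin.append p q) W)
    (α : ℝ) (hα : 0 ≤ α) (hα1 : α < 1) :
    (1 / (1 - α)) * Real.log ((∑ k, W k ^ α) - 1) ≤
      (1 / (1 - α)) * Real.log (∑ i, p i ^ α)
        + (1 / (1 - α)) * Real.log (∑ i, q i ^ α) := by
  classical
  have h1α : (0:ℝ) < 1 - α := by linarith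
  have hA1 : 1 ≤ ∑ i, p i ^ α := by
    rw [← hps]
    apply Finset.sum_le_sum
    intro i _
    rcases eq_or_lt_of_le (hp i) with h | h
    · rw [← h]; exact Real.rpow_nonneg le_rfl α
    · have hle : p i ≤ 1 := by
        rw [← hps]
        exact Finset.single_le_sum (fun j _ => hp j) (Finset.mem_univ i)
      calc p i = p i ^ (1:ℝ) := (Real.rpow_one _).symm
      _ ≤ p i ^ α := Real.rpow_le_rpow_of_exponent_ge h hle hα1.le
  have hB1 : 1 ≤ ∑ i, q i ^ α := by
    rw [← hqs]
    apply Finset.sum_le_sum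
    intro i _
    rcases eq_or_lt_of_le (hq i) with h | h
    · rw [← h]; exact Real.rpow_nonneg le_rfl α
    · have hle : q i ≤ 1 := by
        rw [← hqs]
        exact Finset.single_le_sum (fun j _ => hq j) (Finset.mem_univ i)
      calc q i = q i ^ (1:ℝ) := (Real.rpow_one _).symm
      _ ≤ q i ^ α := Real.rpow_le_rpow_of_exponent_ge h hle hα1.le
  have happ : ∑ i : Fin (N + N), (Fin.append p q) i ^ α
      = (∑ i, p i ^ α) + (∑ i, q i ^ α) := by
    rw [Fin.sum_univ_add]
    simp only [Fin.append_left, Fin.append_right]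
  have hkey : (∑ k, W k ^ α) ≤ (∑ i, p i ^ α) + (∑ i, q i ^ α) := by
    rcases eq_or_lt_of_le hα with h | h
    · rw [← h] at happ ⊢
      simp only [Real.rpow_zero] at happ ⊢
      rw [← happ]
      simp only [Finset.sum_const, Finset.card_univ, Fintype.card_fin, nsmul_eq_mul, mul_one]
      push_cast
      linarith
    · rw [← happ]
      apply sum_rpow_le (Fin.append p q) W ?_ hW hmaj.1 hmaj.2 h hα1
      intro i
      refine Fin.addCases (motive := fun j => 0 ≤ Fin.append p q j) (fun i => ?_) (fun i => ?_) i
      · show 0 ≤ Fin.append p q (Fin.castAdd N i)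
        rw [Fin.append_left]; exact hp i
      · show 0 ≤ Fin.append p q (Fin.natAdd N i)
        rw [Fin.append_right]; exact hq i
  have hS0 : 0 ≤ ∑ k, W k ^ α := Finset.sum_nonneg fun k _ => Real.rpow_nonneg (hW k) α
  have hAB : (∑ k, W k ^ α) - 1 ≤ (∑ i, p i ^ α) * (∑ i, q i ^ α) := by nlinarith
  have hApos : (0:ℝ) < ∑ i, p i ^ α := by linarith
  have hBpos : (0:ℝ) < ∑ i, q i ^ α := by linarith
  have hlog : Real.log ((∑ k, W k ^ α) - 1)
      ≤ Real.log (∑ i, p i ^ α) + Real.log (∑ i, q i ^ α) := by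
    rw [← Real.log_mul hApos.ne' hBpos.ne']
    rcases le_or_gt ((∑ k, W k ^ α) - 1) 0 with h | h
    · have hle : Real.log ((∑ k, W k ^ α) - 1) ≤ 0 := by
        rw [← Real.log_abs]
        exact Real.log_nonpos (abs_nonneg _) (abs_le.mpr ⟨by linarith, by linarith⟩)
      have hge : 0 ≤ Real.log ((∑ i, p i ^ α) * (∑ i, q i ^ α)) :=
        Real.log_nonneg (by nlinarith)
      linarith
    · exact Real.log_le_log h hAB
  calc (1 / (1 - α)) * Real.log ((∑ k, W k ^ α) - 1)
      ≤ (1 / (1 - α)) * (Real.log (∑ i, p i ^ α) + Real.log (∑ i, q i ^ α)) :=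
        mul_le_mul_of_nonneg_left hlog (by positivity)
  _ = (1 / (1 - α)) * Real.log (∑ i, p i ^ α)
        + (1 / (1 - α)) * Real.log (∑ i, q i ^ α) := by ring
end

section
/- For a qubit (N = 2) density matrix ρ with eigenvalues λ_1 ≥ λ_2, λ_1 + λ_2 = 1, two orthonormal bases {|χ_i⟩}, {|φ_i⟩} related by a unitary with s_1 = max_{i,j} |⟨χ_i|φ_j⟩|, and probabilities p_i = ⟨χ_i|ρ|χ_i⟩, q_i = ⟨φ_i|ρ|φ_i⟩, the following hold: p_i ≤ λ_1 for each i; p_i + q_j ≤ λ_1(1+s_1) + λ_2(1−s_1) for all i, j; p_1 + p_2 + q_j ≤ 1 + λ_1 for each j; and p_1 + p_2 + q_1 + q_2 = 2. -/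
open Matrix BigOperators ComplexOrder

private lemma key0 (c d : Fin 2 → ℂ) (hc : star c ⬝ᵥ c = 1) (hd : star d ⬝ᵥ d = 1) :
    Complex.normSq (c 0) + Complex.normSq (d 0) ≤ 1 + ‖star c ⬝ᵥ d‖ := by
  simp only [dotProduct, Fin.sum_univ_two, Pi.star_apply, RCLike.star_def] at hc hd ⊢
  set γ : ℂ := (starRingEnd ℂ) (c 0) * d 0 + (starRingEnd ℂ) (c 1) * d 1 with hγ
  set S : ℝ := Complex.normSq (c 0) + Complex.normSq (d 0) with hS
  have hS0 : 0 ≤ S := add_nonneg (Complex.normSq_nonneg _) (Complex.normSq_nonneg _)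
  set w1 : ℂ := (starRingEnd ℂ) (c 0) * c 1 + (starRingEnd ℂ) (d 0) * d 1 with hw1
  set t : ℂ := c 0 * (starRingEnd ℂ) (d 0) * γ with ht
  have hScx : (S : ℂ) = (starRingEnd ℂ) (c 0) * c 0 + (starRingEnd ℂ) (d 0) * d 0 := by
    rw [hS]; push_cast
    rw [Complex.normSq_eq_conj_mul_self, Complex.normSq_eq_conj_mul_self]
  have E : (S : ℂ) * (S : ℂ) + (starRingEnd ℂ) w1 * w1 = (S : ℂ) + (t + (starRingEnd ℂ) t) := by
    rw [hScx, hw1, ht, hγ]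
    simp only [map_add, _root_.map_mul, Complex.conj_conj]
    linear_combination ((starRingEnd ℂ) (c 0) * c 0) * hc + ((starRingEnd ℂ) (d 0) * d 0) * hd
  have Ere : S ^ 2 + Complex.normSq w1 = S + 2 * t.re := by
    have h := congrArg Complex.re E
    simp only [Complex.add_re, Complex.mul_re, Complex.ofReal_re, Complex.ofReal_im,
      Complex.conj_re, Complex.conj_im] at h
    rw [Complex.normSq_apply]
    linear_combination h
  have h3 : t.re ≤ ‖c 0‖ * ‖d 0‖ * ‖γ‖ := by
    calc t.re ≤ ‖t‖ := Complex.re_le_norm t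
    _ = ‖c 0‖ * ‖d 0‖ * ‖γ‖ := by
        rw [ht]; simp [_root_.map_mul]
  have hab : 2 * (‖c 0‖ * ‖d 0‖) ≤ S := by
    rw [hS, ← Complex.sq_norm, ← Complex.sq_norm]
    nlinarith [sq_nonneg (‖c 0‖ - ‖d 0‖)]
  have hG0 : 0 ≤ ‖γ‖ := norm_nonneg _
  have hfin : S ^ 2 ≤ S + S * ‖γ‖ := by
    nlinarith [Complex.normSq_nonneg w1, mul_le_mul_of_nonneg_right hab hG0,
      mul_le_mul_of_nonneg_left h3 (by norm_num : (0:ℝ) ≤ 2)]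
  show S ≤ 1 + ‖γ‖
  nlinarith [hS0, hG0]

private lemma key14 (c d : Fin 2 → ℂ) (hc : star c ⬝ᵥ c = 1) (hd : star d ⬝ᵥ d = 1) (m : Fin 2) :
    Complex.normSq (c m) + Complex.normSq (d m) ≤ 1 + ‖star c ⬝ᵥ d‖ := by
  fin_cases m
  · exact key0 c d hc hd
  · have h := key0 ![c 1, c 0] ![d 1, d 0] (by
      simpa [dotProduct, Fin.sum_univ_two, add_comm] using hc) (by
      simpa [dotProduct, Fin.sum_univ_two, add_comm] using hd)
    have e2 : star ![c 1, c 0] ⬝ᵥ ![d 1, d 0] = star c ⬝ᵥ d := by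
      simp [dotProduct, Fin.sum_univ_two, add_comm]
    rw [e2] at h
    simpa using h

private lemma quad_formula {A : Matrix (Fin 2) (Fin 2) ℂ} (hA : A.IsHermitian) (x : Fin 2 → ℂ) :
    star x ⬝ᵥ A *ᵥ x = ∑ i, (hA.eigenvalues i : ℂ) *
      (Complex.normSq (((hA.eigenvectorUnitary : Matrix (Fin 2) (Fin 2) ℂ)ᴴ *ᵥ x) i) : ℂ) := by
  set U := (hA.eigenvectorUnitary : Matrix (Fin 2) (Fin 2) ℂ) with hU
  set y := Uᴴ *ᵥ x with hy
  have h1 : star x ᵥ* U = star y := by rw [hy, star_mulVec, conjTranspose_conjTranspose]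
  have h2 : A = U * diagonal (RCLike.ofReal ∘ hA.eigenvalues) * Uᴴ := by
    simpa [Matrix.star_eq_conjTranspose] using hA.spectral_theorem
  conv_lhs => rw [h2]
  rw [← mulVec_mulVec, ← mulVec_mulVec, dotProduct_mulVec, h1]
  have h3 : diagonal (RCLike.ofReal ∘ hA.eigenvalues) *ᵥ y
      = fun i => (hA.eigenvalues i : ℂ) * y i := by
    ext i; simp [mulVec, diagonal_dotProduct]
  rw [h3]
  simp only [dotProduct, Fin.sum_univ_two, Pi.star_apply, RCLike.star_def]
  rw [Complex.normSq_eq_conj_mul_self, Complex.normSq_eq_conj_mul_self]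
  ring

private lemma inner_pres {A : Matrix (Fin 2) (Fin 2) ℂ} (hA : A.IsHermitian) (x z : Fin 2 → ℂ) :
    star ((hA.eigenvectorUnitary : Matrix (Fin 2) (Fin 2) ℂ)ᴴ *ᵥ x)
      ⬝ᵥ ((hA.eigenvectorUnitary : Matrix (Fin 2) (Fin 2) ℂ)ᴴ *ᵥ z) = star x ⬝ᵥ z := by
  set U := (hA.eigenvectorUnitary : Matrix (Fin 2) (Fin 2) ℂ) with hU
  have hU1 : U * Uᴴ = 1 := by
    have := Matrix.mem_unitaryGroup_iff.mp hA.eigenvectorUnitary.2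
    simpa [Matrix.star_eq_conjTranspose] using this
  rw [star_mulVec, conjTranspose_conjTranspose, ← dotProduct_mulVec, mulVec_mulVec, hU1, one_mulVec]

/-- Qubit probability bounds: p_i ≤ λ₁, p_i + q_j ≤ λ₁(1+s₁)+λ₂(1−s₁),
p₁+p₂+q_j ≤ 1+λ₁ and p₁+p₂+q₁+q₂ = 2. -/
theorem stmt14 (ρ : Matrix (Fin 2) (Fin 2) ℂ) (hρ : ρ.PosSemidef) (htr : ρ.trace = 1)
    (lam1 lam2 : ℝ) (hord : lam2 ≤ lam1) (hsum : lam1 + lam2 = 1)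
    (hspec : ∃ e : Equiv.Perm (Fin 2), (hρ.1.eigenvalues ∘ e) = ![lam1, lam2])
    (χ φ : Fin 2 → Fin 2 → ℂ)
    (hχ : ∀ i j, star (χ i) ⬝ᵥ χ j = if i = j then 1 else 0)
    (hφ : ∀ i j, star (φ i) ⬝ᵥ φ j = if i = j then 1 else 0)
    (s1 : ℝ)
    (hs1 : IsGreatest {x | ∃ i j, x = ‖star (χ i) ⬝ᵥ φ j‖} s1)
    (p q : Fin 2 → ℝ)
    (hp : ∀ i, p i = (star (χ i) ⬝ᵥ ρ.mulVec (χ i)).re)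
    (hq : ∀ i, q i = (star (φ i) ⬝ᵥ ρ.mulVec (φ i)).re) :
    (∀ i, p i ≤ lam1) ∧
    (∀ i j, p i + q j ≤ lam1 * (1 + s1) + lam2 * (1 - s1)) ∧
    (∀ j, p 0 + p 1 + q j ≤ 1 + lam1) ∧
    (p 0 + p 1 + q 0 + q 1 = 2) := by
  obtain ⟨e, he⟩ := hspec
  have hl0 : hρ.1.eigenvalues (e 0) = lam1 := by simpa using congrFun he 0
  have hl1 : hρ.1.eigenvalues (e 1) = lam2 := by simpa using congrFun he 1
  set U := (hρ.1.eigenvectorUnitary : Matrix (Fin 2) (Fin 2) ℂ) with hUdef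
  set y : (Fin 2 → ℂ) → (Fin 2 → ℂ) := fun x => Uᴴ *ᵥ x with hy
  -- unit vectors among χ, φ
  have hχu : ∀ i, star (χ i) ⬝ᵥ χ i = 1 := fun i => by simpa using hχ i i
  have hφu : ∀ i, star (φ i) ⬝ᵥ φ i = 1 := fun i => by simpa using hφ i i
  -- y preserves inner products
  have hinner : ∀ x z, star (y x) ⬝ᵥ (y z) = star x ⬝ᵥ z := fun x z => inner_pres hρ.1 x z
  -- sum over permuted index
  have hperm : ∀ f : Fin 2 → ℝ, f (e 0) + f (e 1) = f 0 + f 1 := by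
    intro f
    have := Equiv.sum_comp e f
    simpa [Fin.sum_univ_two] using this
  -- norm characterization
  have hnorm1 : ∀ x : Fin 2 → ℂ, star x ⬝ᵥ x = 1 →
      Complex.normSq (y x (e 0)) + Complex.normSq (y x (e 1)) = 1 := by
    intro x hx
    have h1 : star (y x) ⬝ᵥ (y x) = 1 := by rw [hinner, hx]
    have h2 : star (y x) ⬝ᵥ (y x)
        = ((Complex.normSq (y x 0) + Complex.normSq (y x 1) : ℝ) : ℂ) := by
      simp only [dotProduct, Fin.sum_univ_two, Pi.star_apply, RCLike.star_def]
      push_cast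
      rw [Complex.normSq_eq_conj_mul_self, Complex.normSq_eq_conj_mul_self]
    rw [h2] at h1
    have h3 : Complex.normSq (y x 0) + Complex.normSq (y x 1) = 1 := by
      exact_mod_cast h1
    rw [hperm (fun i => Complex.normSq (y x i))]
    exact h3
  -- quadratic form
  have hquad : ∀ x : Fin 2 → ℂ, star x ⬝ᵥ x = 1 →
      (star x ⬝ᵥ ρ *ᵥ x).re = lam1 * Complex.normSq (y x (e 0))
        + lam2 * (1 - Complex.normSq (y x (e 0))) := by
    intro x hx
    have h1 := quad_formula hρ.1 x
    have h2 : ∑ i, (hρ.1.eigenvalues i : ℂ) * (Complex.normSq (y x i) : ℂ)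
        = ((lam1 * Complex.normSq (y x (e 0)) + lam2 * Complex.normSq (y x (e 1)) : ℝ) : ℂ) := by
      have h3 := Equiv.sum_comp e (fun i => (hρ.1.eigenvalues i : ℂ) * (Complex.normSq (y x i) : ℂ))
      rw [← h3, Fin.sum_univ_two]
      rw [hl0, hl1]
      push_cast
      ring
    rw [h1, h2]
    have h4 := hnorm1 x hx
    rw [Complex.ofReal_re]
    nlinarith [h4]
  -- generic single bound
  have bound1 : ∀ x : Fin 2 → ℂ, star x ⬝ᵥ x = 1 → (star x ⬝ᵥ ρ *ᵥ x).re ≤ lam1 := by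
    intro x hx
    rw [hquad x hx]
    have h4 := hnorm1 x hx
    nlinarith [Complex.normSq_nonneg (y x (e 0)), Complex.normSq_nonneg (y x (e 1))]
  -- claim 1
  have claim1 : ∀ i, p i ≤ lam1 := fun i => by rw [hp i]; exact bound1 _ (hχu i)
  have claim1q : ∀ i, q i ≤ lam1 := fun i => by rw [hq i]; exact bound1 _ (hφu i)
  -- claim 2
  have claim2 : ∀ i j, p i + q j ≤ lam1 * (1 + s1) + lam2 * (1 - s1) := by
    intro i j
    have hcu : star (y (χ i)) ⬝ᵥ (y (χ i)) = 1 := by rw [hinner]; exact hχu i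
    have hdu : star (y (φ j)) ⬝ᵥ (y (φ j)) = 1 := by rw [hinner]; exact hφu j
    have hk := key14 (y (χ i)) (y (φ j)) hcu hdu (e 0)
    rw [hinner] at hk
    have hs : ‖star (χ i) ⬝ᵥ φ j‖ ≤ s1 := hs1.2 ⟨i, j, rfl⟩
    have hkey : Complex.normSq (y (χ i) (e 0)) + Complex.normSq (y (φ j) (e 0)) ≤ 1 + s1 :=
      le_trans hk (by linarith)
    rw [hp i, hq j, hquad _ (hχu i), hquad _ (hφu j)]
    have h1 := hnorm1 _ (hχu i)
    have h2 := hnorm1 _ (hφu j)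
    nlinarith [Complex.normSq_nonneg (y (χ i) (e 0)), Complex.normSq_nonneg (y (φ j) (e 0)),
      mul_nonneg (sub_nonneg.2 hord) (sub_nonneg.2 hkey)]
  -- completeness of χ and φ, sums equal 1
  have hsumgen : ∀ ψ : Fin 2 → Fin 2 → ℂ, (∀ i j, star (ψ i) ⬝ᵥ ψ j = if i = j then 1 else 0) →
      (star (ψ 0) ⬝ᵥ ρ *ᵥ ψ 0).re + (star (ψ 1) ⬝ᵥ ρ *ᵥ ψ 1).re = 1 := by
    intro ψ hψ
    have hCC : (Matrix.of ψ) * (Matrix.of ψ)ᴴ = 1 := by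
      ext i j
      have := hψ j i
      simp only [dotProduct, Fin.sum_univ_two, Pi.star_apply, RCLike.star_def] at this
      simp only [mul_apply, conjTranspose_apply, Fin.sum_univ_two, of_apply, Matrix.one_apply,
        RCLike.star_def]
      rcases eq_or_ne i j with h | h
      · subst h; simp only [if_pos rfl] at this ⊢; linear_combination this
      · simp only [if_neg h, if_neg (Ne.symm h)] at this ⊢; linear_combination this
    have hC2 : (Matrix.of ψ)ᴴ * (Matrix.of ψ) = 1 := mul_eq_one_comm.mp hCC
    have h00 := congrFun (congrFun hC2 0) 0
    have h01 := congrFun (congrFun hC2 0) 1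
    have h10 := congrFun (congrFun hC2 1) 0
    have h11 := congrFun (congrFun hC2 1) 1
    simp only [mul_apply, conjTranspose_apply, Fin.sum_univ_two, of_apply, Matrix.one_apply,
      RCLike.star_def, if_pos rfl, if_true, if_neg (by norm_num : (0 : Fin 2) ≠ 1),
      if_neg (by norm_num : (1 : Fin 2) ≠ 0)] at h00 h01 h10 h11
    have hC : star (ψ 0) ⬝ᵥ ρ *ᵥ ψ 0 + star (ψ 1) ⬝ᵥ ρ *ᵥ ψ 1 = ρ 0 0 + ρ 1 1 := by
      simp only [dotProduct, mulVec, Fin.sum_univ_two, Pi.star_apply, RCLike.star_def]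
      linear_combination ρ 0 0 * h00 + ρ 0 1 * h01 + ρ 1 0 * h10 + ρ 1 1 * h11
    have htr2 : ρ 0 0 + ρ 1 1 = 1 := by
      simpa [Matrix.trace, Matrix.diag, Fin.sum_univ_two] using htr
    have := congrArg Complex.re (hC.trans htr2)
    simpa [Complex.add_re] using this
  have hsump : p 0 + p 1 = 1 := by rw [hp 0, hp 1]; exact hsumgen χ hχ
  have hsumq : q 0 + q 1 = 1 := by rw [hq 0, hq 1]; exact hsumgen φ hφ
  refine ⟨claim1, claim2, fun j => ?_, by linarith⟩
  have := claim1q j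
  linarith
end
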